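/- Assume f = Σ_{i=1}^N f_i with each f_i : ℝ^{d₁} → ℝ convex and L_i-smooth (L = Σ L_i), h* : ℝ^{d₂} → (−∞,∞] proper closed convex, K a real d₂×d₁ matrix, and that the Lagrangian L(x,y) = f(x) + ⟨Kx,y⟩ − h*(y) has a saddle point (x̂, ŷ). Let {(x_k,y_k)} be generated by the extrapolated PD-PIAG iteration g_k = Σ_i ∇f_i(x_{k−τ_k^i}) (delays τ_k^i ∈ {0,…,T}), x_{k+1} = x_k − σ g_k − σ Kᵀ(2y_k − y_{k−1}), y_{k+1} = Prox_{τ h*}(y_k + τ K x_{k+1}), with step sizes satisfying √(τσ)‖K‖ + σL(T+1)² < 1. Then for every k ≥ 0, ‖x_k − x̂‖²/(2σ) + ‖y_k − ŷ‖²/(2τ) ≤ C (‖x_0 − x̂‖²/(2σ) + ‖y_0 − ŷ‖²/(2τ)) with C = (1 − τσ‖K‖²)^{−1}; in particular the sequence {(x_k, y_k)} is bounded. -/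

import Mathlib

/-!
A Lyapunov argument. With `β = √(τσ)‖K‖`, the energy
`V_k = ‖x_k - x̂‖²/(2σ) + ‖y_k - ŷ‖²/(2τ) + ⟪K (x_k - x̂), y_{k-1} - y_k⟫ + ‖y_k - y_{k-1}‖²/(2τ)`
satisfies
`V_{k+1} + (1 - β) (‖x_{k+1} - x_k‖²/(2σ) + ‖y_k - y_{k-1}‖²/(2τ)) ≤ V_k + e_k`:
convexity and smoothness of the `f_i` with the primal saddle inequality bound the primal step,
the optimality condition of the prox with the dual saddle inequality bound the dual step, and
Young's inequality controls the term created by the extrapolation `2 y_k - y_{k-1}`. The price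
of the stale gradients, `e_k = ∑ᵢ Lᵢ/2 ‖x_{k+1} - x_{k-τ_k^i}‖²`, telescopes over at most `T + 1`
consecutive primal steps, so `∑_{k<n} e_k ≤ σL(T+1)² ∑_{k<n} ‖x_{k+1} - x_k‖²/(2σ)`, which the
step-size condition absorbs; hence `V_n ≤ V_0`. Young's inequality once more gives
`V_n ≥ (1 - τσ‖K‖²) (‖x_n - x̂‖²/(2σ) + ‖y_n - ŷ‖²/(2τ))`.
-/

open scoped RealInnerProductSpace
open Filter Topology

noncomputable section

/-- `L`-smoothness of a real-valued function, in the sense of assumption A1: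
differentiability together with the two-sided quadratic bound. -/
def LSmooth {d : ℕ} (g : EuclideanSpace ℝ (Fin d) → ℝ) (L : ℝ) : Prop :=
  Differentiable ℝ g ∧
    ∀ x y : EuclideanSpace ℝ (Fin d),
      |g y - g x - ⟪gradient g x, y - x⟫| ≤ L / 2 * ‖y - x‖ ^ 2

/-- Assumption B1: `δ`-strong convexity in the weak sense (`δ` may be negative). -/
def WeakStrConvex {d : ℕ} (g : EuclideanSpace ℝ (Fin d) → ℝ) (δ : ℝ) : Prop :=
  ∀ x y : EuclideanSpace ℝ (Fin d),
    g x + ⟪gradient g x, y - x⟫ + δ / 2 * ‖y - x‖ ^ 2 ≤ g y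

/-- Properness of an `EReal`-valued function: finite somewhere and never `⊥`. -/
def EProper {d : ℕ} (g : EuclideanSpace ℝ (Fin d) → EReal) : Prop :=
  (∃ z, g z ≠ ⊤) ∧ ∀ z, g z ≠ ⊥

/-- Convexity of an `EReal`-valued function. -/
def EConvexFn {d : ℕ} (g : EuclideanSpace ℝ (Fin d) → EReal) : Prop :=
  ∀ z w : EuclideanSpace ℝ (Fin d), ∀ a b : ℝ, 0 ≤ a → 0 ≤ b → a + b = 1 →
    g (a • z + b • w) ≤ (a : EReal) * g z + (b : EReal) * g w

/-- Assumption B2: `γ`-strong convexity of an `EReal`-valued function, stated via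
subgradients: for every subgradient `v` of `g` at `z` one has the quadratic lower bound. -/
def EStrongConvexFn {d : ℕ} (g : EuclideanSpace ℝ (Fin d) → EReal) (γ : ℝ) : Prop :=
  ∀ z v : EuclideanSpace ℝ (Fin d),
    (∀ u, g z + ((⟪v, u - z⟫ : ℝ) : EReal) ≤ g u) →
      ∀ u, g z + ((⟪v, u - z⟫ + γ / 2 * ‖u - z‖ ^ 2 : ℝ) : EReal) ≤ g u

/-- `p = Prox_g(z)`: `p` minimizes `u ↦ g u + ‖u - z‖² / 2`. -/
def IsProxPt {d : ℕ} (g : EuclideanSpace ℝ (Fin d) → EReal)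
    (z p : EuclideanSpace ℝ (Fin d)) : Prop :=
  ∀ u, g p + ((‖p - z‖ ^ 2 / 2 : ℝ) : EReal) ≤ g u + ((‖u - z‖ ^ 2 / 2 : ℝ) : EReal)

/-- The Lagrangian `L(x, y) = f x + ⟪K x, y⟫ - h*(y)`, valued in `EReal`. -/
def Lagr {d₁ d₂ : ℕ} (f : EuclideanSpace ℝ (Fin d₁) → ℝ)
    (hstar : EuclideanSpace ℝ (Fin d₂) → EReal)
    (K : EuclideanSpace ℝ (Fin d₁) →L[ℝ] EuclideanSpace ℝ (Fin d₂))
    (x : EuclideanSpace ℝ (Fin d₁)) (y : EuclideanSpace ℝ (Fin d₂)) : EReal :=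
  (f x : EReal) + ((⟪K x, y⟫ : ℝ) : EReal) - hstar y

/-- `(xh, yh)` is a saddle point of `Lg`. -/
def IsSaddlePt {d₁ d₂ : ℕ}
    (Lg : EuclideanSpace ℝ (Fin d₁) → EuclideanSpace ℝ (Fin d₂) → EReal)
    (xh : EuclideanSpace ℝ (Fin d₁)) (yh : EuclideanSpace ℝ (Fin d₂)) : Prop :=
  ∀ (x : EuclideanSpace ℝ (Fin d₁)) (y : EuclideanSpace ℝ (Fin d₂)),
    Lg xh y ≤ Lg xh yh ∧ Lg xh yh ≤ Lg x yh

theorem ConvexOn.inner_gradient_le_sub {E : Type*} [NormedAddCommGroup E] [InnerProductSpace ℝ E]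
    [CompleteSpace E] {g : E → ℝ} (hg : ConvexOn ℝ Set.univ g) {a : E}
    (hd : DifferentiableAt ℝ g a) (b : E) :
    ⟪gradient g a, b - a⟫ ≤ g b - g a := by
  set ℓ := AffineMap.lineMap (k := ℝ) a b
  have hg' : HasFDerivAt g (InnerProductSpace.toDual ℝ E (gradient g a)) (ℓ 0) := by
    simpa [ℓ] using hd.hasGradientAt.hasFDerivAt
  have hline : HasDerivAt (g ∘ ℓ) ⟪gradient g a, b - a⟫ 0 := by
    simpa using hg'.comp_hasDerivAt 0 AffineMap.hasDerivAt_lineMap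
  simpa [slope, ℓ] using (hg.comp_affineMap ℓ).le_slope_of_hasDerivAt
    (Set.mem_univ 0) (Set.mem_univ 1) zero_lt_one hline

theorem le_zero_of_forall_le_mul {a c : ℝ} (h : ∀ t : ℝ, 0 < t → t ≤ 1 → a ≤ t * c) : a ≤ 0 := by
  have hlim : Tendsto (fun t : ℝ => t * c) (𝓝[>] 0) (𝓝 0) := by
    simpa using (tendsto_nhdsWithin_of_tendsto_nhds (a := (0 : ℝ)) (s := Set.Ioi 0)
      tendsto_id).mul_const c
  refine ge_of_tendsto hlim ?_
  filter_upwards [Ioc_mem_nhdsGT (zero_lt_one' ℝ)] with t ht using h t ht.1 ht.2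

section InnerProduct

variable {E F : Type*} [NormedAddCommGroup E] [InnerProductSpace ℝ E]
  [NormedAddCommGroup F] [InnerProductSpace ℝ F]

theorem inner_sub_sub_eq (a b c : E) :
    ⟪a - b, b - c⟫ = (‖a - c‖ ^ 2 - ‖a - b‖ ^ 2 - ‖b - c‖ ^ 2) / 2 := by
  have h := norm_add_sq_real (a - b) (b - c)
  rw [sub_add_sub_cancel] at h
  linarith

theorem mul_le_sqrt_mul_mul_add {s t : ℝ} (hs : 0 < s) (ht : 0 < t) (a b : ℝ) :
    a * b ≤ √(s * t) * (a ^ 2 / (2 * s) + b ^ 2 / (2 * t)) := by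
  obtain ⟨u, hu, rfl⟩ : ∃ u, 0 < u ∧ s = u ^ 2 :=
    ⟨√s, Real.sqrt_pos.2 hs, (Real.sq_sqrt hs.le).symm⟩
  obtain ⟨v, hv, rfl⟩ : ∃ v, 0 < v ∧ t = v ^ 2 :=
    ⟨√t, Real.sqrt_pos.2 ht, (Real.sq_sqrt ht.le).symm⟩
  rw [← mul_pow, Real.sqrt_sq (by positivity)]
  have key : u * v * (a ^ 2 / (2 * u ^ 2) + b ^ 2 / (2 * v ^ 2)) - a * b
      = (v * a - u * b) ^ 2 / (2 * u * v) := by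
    field_simp
    ring
  have := div_nonneg (sq_nonneg (v * a - u * b)) (by positivity : (0 : ℝ) ≤ 2 * u * v)
  linarith

theorem inner_apply_le_sqrt_mul_opNorm (K : E →L[ℝ] F) {σ τ : ℝ} (hσ : 0 < σ) (hτ : 0 < τ)
    (v : E) (w : F) :
    ⟪K v, w⟫ ≤ √(τ * σ) * ‖K‖ * (‖v‖ ^ 2 / (2 * σ) + ‖w‖ ^ 2 / (2 * τ)) :=
  calc ⟪K v, w⟫ ≤ ‖K‖ * (‖v‖ * ‖w‖) := by
        rw [← mul_assoc]
        exact (real_inner_le_norm _ _).trans (by gcongr; exact K.le_opNorm v)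
    _ ≤ ‖K‖ * (√(σ * τ) * (‖v‖ ^ 2 / (2 * σ) + ‖w‖ ^ 2 / (2 * τ))) :=
        mul_le_mul_of_nonneg_left (mul_le_sqrt_mul_mul_add hσ hτ _ _) (norm_nonneg K)
    _ = _ := by rw [mul_comm σ τ]; ring

theorem neg_inner_apply_le (K : E →L[ℝ] F) {τ : ℝ} (hτ : 0 < τ) (v : E) (w : F) :
    -⟪K v, w⟫ ≤ τ * ‖K‖ ^ 2 * ‖v‖ ^ 2 / 2 + ‖w‖ ^ 2 / (2 * τ) :=
  calc -⟪K v, w⟫ ≤ (‖K‖ * ‖v‖) * ‖w‖ :=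
        (neg_le_abs _).trans ((abs_real_inner_le_norm _ _).trans (by gcongr; exact K.le_opNorm v))
    _ ≤ √(τ⁻¹ * τ) * ((‖K‖ * ‖v‖) ^ 2 / (2 * τ⁻¹) + ‖w‖ ^ 2 / (2 * τ)) :=
        mul_le_sqrt_mul_mul_add (inv_pos.2 hτ) hτ _ _
    _ = _ := by
        rw [inv_mul_cancel₀ hτ.ne', Real.sqrt_one]
        field_simp

theorem primal_step_inner_le [CompleteSpace E] [CompleteSpace F] (K : E →L[ℝ] F) {σ : ℝ}
    (hσ : 0 < σ)    {x₀ x₁ xh G : E} {yb yh : F} {f₁ fh e : ℝ}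
    (hx : x₁ = x₀ - σ • G - σ • (ContinuousLinearMap.adjoint K) yb)
    (hf : f₁ - fh ≤ ⟪G, x₁ - xh⟫ + e) (hsad : fh + ⟪K xh, yh⟫ ≤ f₁ + ⟪K x₁, yh⟫) :
    ⟪K (x₁ - xh), yb - yh⟫
      ≤ (‖x₀ - xh‖ ^ 2 - ‖x₁ - x₀‖ ^ 2 - ‖x₁ - xh‖ ^ 2) / (2 * σ) + e := by
  have hid : σ * (⟪G, x₁ - xh⟫ + ⟪K (x₁ - xh), yb⟫)
      = (‖x₀ - xh‖ ^ 2 - ‖x₁ - x₀‖ ^ 2 - ‖x₁ - xh‖ ^ 2) / 2 := by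
    rw [← norm_neg (x₁ - x₀), neg_sub, ← inner_sub_sub_eq,
      show x₀ - x₁ = σ • (G + (ContinuousLinearMap.adjoint K) yb) by rw [hx]; module,
      real_inner_smul_left, inner_add_left, ContinuousLinearMap.adjoint_inner_left,
      real_inner_comm (K (x₁ - xh)) yb]
  have hK : ⟪K (x₁ - xh), yb - yh⟫ = ⟪K (x₁ - xh), yb⟫ - ⟪K x₁, yh⟫ + ⟪K xh, yh⟫ := by
    rw [inner_sub_right, map_sub, inner_sub_left, inner_sub_left]
    ring
  rw [hK, div_add' _ _ _ (by positivity), le_div_iff₀ (by positivity)]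
  nlinarith

theorem dual_step_inner_le (K : E →L[ℝ] F) {τ : ℝ} (hτ : 0 < τ) {x₁ xh : E} {y₀ y₁ yh : F}
    {h₁ hh : ℝ}    (hprox : τ * h₁ + ⟪y₀ + τ • K x₁ - y₁, yh - y₁⟫ ≤ τ * hh)
    (hsad : ⟪K xh, y₁⟫ - h₁ ≤ ⟪K xh, yh⟫ - hh) :
    τ * ⟪K (x₁ - xh), yh - y₁⟫ ≤ (‖y₀ - yh‖ ^ 2 - ‖y₁ - y₀‖ ^ 2 - ‖y₁ - yh‖ ^ 2) / 2 := by
  have hid := inner_sub_sub_eq y₀ y₁ yh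
  rw [norm_sub_rev y₀ y₁] at hid
  have hsplit : ⟪y₀ + τ • K x₁ - y₁, yh - y₁⟫
      = -⟪y₀ - y₁, y₁ - yh⟫ + τ * ⟪K x₁, yh - y₁⟫ := by
    rw [show y₀ + τ • K x₁ - y₁ = (y₀ - y₁) + τ • K x₁ by abel, inner_add_left,
      real_inner_smul_left, ← inner_neg_right, neg_sub]
  have hK : ⟪K (x₁ - xh), yh - y₁⟫ = ⟪K x₁, yh - y₁⟫ - (⟪K xh, yh⟫ - ⟪K xh, y₁⟫) := by
    rw [map_sub, inner_sub_left, inner_sub_right (K xh)]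
  rw [hK]
  nlinarith

/-- `y'` is the dual iterate preceding `y`. -/
def pdEnergy (K : E →L[ℝ] F) (σ τ : ℝ) (xh : E) (yh : F) (x : E) (y' y : F) : ℝ :=
  ‖x - xh‖ ^ 2 / (2 * σ) + ‖y - yh‖ ^ 2 / (2 * τ) + ⟪K (x - xh), y' - y⟫ + ‖y - y'‖ ^ 2 / (2 * τ)

theorem pdEnergy_step (K : E →L[ℝ] F) {σ τ : ℝ} (hσ : 0 < σ) (hτ : 0 < τ)
    {x₀ x₁ xh : E} {y' y₀ y₁ yh : F} {e : ℝ}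
    (hP : ⟪K (x₁ - xh), (2 : ℝ) • y₀ - y' - yh⟫
      ≤ (‖x₀ - xh‖ ^ 2 - ‖x₁ - x₀‖ ^ 2 - ‖x₁ - xh‖ ^ 2) / (2 * σ) + e)
    (hD : τ * ⟪K (x₁ - xh), yh - y₁⟫ ≤ (‖y₀ - yh‖ ^ 2 - ‖y₁ - y₀‖ ^ 2 - ‖y₁ - yh‖ ^ 2) / 2) :
    pdEnergy K σ τ xh yh x₁ y₀ y₁
        + (1 - √(τ * σ) * ‖K‖) * (‖x₁ - x₀‖ ^ 2 / (2 * σ) + ‖y₀ - y'‖ ^ 2 / (2 * τ))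
      ≤ pdEnergy K σ τ xh yh x₀ y' y₀ + e := by
  have hD' : ⟪K (x₁ - xh), yh - y₁⟫
      ≤ ‖y₀ - yh‖ ^ 2 / (2 * τ) - ‖y₁ - y₀‖ ^ 2 / (2 * τ) - ‖y₁ - yh‖ ^ 2 / (2 * τ) := by
    rw [← sub_div, ← sub_div, le_div_iff₀ (by positivity)]
    linarith
  rw [sub_div, sub_div] at hP
  have hsplit : ⟪K (x₁ - xh), (2 : ℝ) • y₀ - y' - yh⟫ + ⟪K (x₁ - xh), yh - y₁⟫
      = ⟪K (x₁ - xh), y₀ - y₁⟫ - ⟪K (x₀ - xh), y' - y₀⟫ - ⟪K (x₁ - x₀), y' - y₀⟫ := by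
    simp only [map_sub, inner_sub_left, inner_sub_right, inner_smul_right]
    ring
  have hcross := inner_apply_le_sqrt_mul_opNorm K hσ hτ (x₁ - x₀) (y' - y₀)
  rw [norm_sub_rev y' y₀] at hcross
  unfold pdEnergy
  rw [norm_sub_rev y₀ y'] at *
  linarith

theorem mul_le_pdEnergy (K : E →L[ℝ] F) {σ τ : ℝ} (hσ : 0 < σ) (hτ : 0 < τ) (xh : E) (yh : F)
    (x : E) (y' y : F) :
    (1 - τ * σ * ‖K‖ ^ 2) * (‖x - xh‖ ^ 2 / (2 * σ) + ‖y - yh‖ ^ 2 / (2 * τ))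
      ≤ pdEnergy K σ τ xh yh x y' y := by
  have hcross := neg_inner_apply_le K hτ (x - xh) (y' - y)
  have hy : 0 ≤ τ * σ * ‖K‖ ^ 2 * (‖y - yh‖ ^ 2 / (2 * τ)) := by positivity
  have hx : τ * σ * ‖K‖ ^ 2 * (‖x - xh‖ ^ 2 / (2 * σ)) = τ * ‖K‖ ^ 2 * ‖x - xh‖ ^ 2 / 2 := by
    field_simp
  rw [norm_sub_rev y' y] at hcross
  unfold pdEnergy
  linarith

end InnerProduct

section Delays

open Finset

variable {E : Type*} [SeminormedAddCommGroup E]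

theorem norm_sub_delayed_sq_le (x : ℤ → E) (k : ℤ) {c T : ℕ} (hc : c ≤ T) :
    ‖x (k + 1) - x (k - c)‖ ^ 2
      ≤ (T + 1) * ∑ j ∈ range (T + 1), ‖x (k - j + 1) - x (k - j)‖ ^ 2 := by
  have htel : x (k + 1) - x (k - c) = ∑ j ∈ range (c + 1), (x (k - j + 1) - x (k - j)) := by
    have h := sum_range_sub' (fun j : ℕ => x (k - j + 1)) (c + 1)
    simp only [Nat.cast_add, Nat.cast_one, Nat.cast_zero, sub_zero,
      show ∀ j : ℤ, k - (j + 1) + 1 = k - j from fun j => by ring] at h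
    exact h.symm
  have hnonneg : ∀ j : ℕ, 0 ≤ ‖x (k - j + 1) - x (k - j)‖ ^ 2 := fun _ => by positivity
  calc ‖x (k + 1) - x (k - c)‖ ^ 2
      ≤ (∑ j ∈ range (c + 1), ‖x (k - j + 1) - x (k - j)‖) ^ 2 := by
        rw [htel]
        gcongr
        exact norm_sum_le _ _
    _ ≤ (c + 1 : ℕ) * ∑ j ∈ range (c + 1), ‖x (k - j + 1) - x (k - j)‖ ^ 2 := by
        simpa using sq_sum_le_card_mul_sum_sq (s := range (c + 1))
          (f := fun j : ℕ => ‖x (k - j + 1) - x (k - j)‖)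
    _ ≤ (T + 1) * ∑ j ∈ range (T + 1), ‖x (k - j + 1) - x (k - j)‖ ^ 2 :=
        mul_le_mul (by push_cast; exact_mod_cast Nat.add_le_add_right hc 1)
          (sum_le_sum_of_subset_of_nonneg (range_subset_range.2 (by omega))
            fun j _ _ => hnonneg j)
          (sum_nonneg fun j _ => hnonneg j) (by positivity)

theorem sum_range_comp_sub_le {D : ℤ → ℝ} (hD : ∀ m < 0, D m = 0) (hD' : ∀ m, 0 ≤ D m)
    (j n : ℕ) :
    ∑ k ∈ range n, D (k - j) ≤ ∑ k ∈ range n, D k :=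
  calc ∑ k ∈ range n, D (k - j) ≤ ∑ k ∈ range (j + n), D (k - j) :=
        sum_le_sum_of_subset_of_nonneg (range_subset_range.2 (by omega)) fun _ _ _ => hD' _
    _ = ∑ k ∈ range n, D k := by
        rw [sum_range_add, sum_eq_zero fun k hk => hD _ (by simp only [mem_range] at hk; omega),
          zero_add]
        push_cast
        simp

theorem sum_sum_delayed_sq_le {ι : Type*} [Fintype ι] {x : ℤ → E} (hx : ∀ k ≤ 0, x k = x 0)
    {L : ι → ℝ} (hL : ∀ i, 0 ≤ L i) {dly : ℤ → ι → ℕ} {T : ℕ} (hdly : ∀ k i, dly k i ≤ T)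
    (n : ℕ) :
    ∑ k ∈ range n, ∑ i, L i * ‖x (k + 1) - x (k - dly k i)‖ ^ 2
      ≤ (∑ i, L i) * (T + 1) ^ 2 * ∑ k ∈ range n, ‖x (k + 1) - x k‖ ^ 2 := by
  set D : ℤ → ℝ := fun m => ‖x (m + 1) - x m‖ ^ 2
  have hD0 : ∀ m < 0, D m = 0 := fun m hm => by simp [D, hx m hm.le, hx (m + 1) (by omega)]
  have hC : 0 ≤ (∑ i, L i) * (T + 1) := mul_nonneg (sum_nonneg fun i _ => hL i) (by positivity)
  have hk : ∀ k : ℤ, ∑ i, L i * ‖x (k + 1) - x (k - dly k i)‖ ^ 2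
      ≤ (∑ i, L i) * (T + 1) * ∑ j ∈ range (T + 1), D (k - j) := fun k =>
    calc ∑ i, L i * ‖x (k + 1) - x (k - dly k i)‖ ^ 2
        ≤ ∑ i, L i * ((T + 1) * ∑ j ∈ range (T + 1), D (k - j)) :=
          sum_le_sum fun i _ => mul_le_mul_of_nonneg_left
            (norm_sub_delayed_sq_le x k (hdly k i)) (hL i)
      _ = _ := by rw [← sum_mul, mul_assoc]
  calc ∑ k ∈ range n, ∑ i, L i * ‖x (k + 1) - x (k - dly k i)‖ ^ 2
      ≤ ∑ k ∈ range n, (∑ i, L i) * (T + 1) * ∑ j ∈ range (T + 1), D (k - j) :=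
        sum_le_sum fun k _ => hk k
    _ = (∑ i, L i) * (T + 1) * ∑ j ∈ range (T + 1), ∑ k ∈ range n, D (k - j) := by
        rw [← mul_sum, sum_comm]
    _ ≤ (∑ i, L i) * (T + 1) * ∑ j ∈ range (T + 1), ∑ k ∈ range n, D k :=
        mul_le_mul_of_nonneg_left
          (sum_le_sum fun j _ => sum_range_comp_sub_le hD0 (fun _ => by positivity) j n) hC
    _ = _ := by
        rw [sum_const, card_range, nsmul_eq_mul]
        push_cast
        ring

end Delays

theorem le_initial_of_step_bound {V E D Q : ℕ → ℝ} {β c : ℝ} (hβ : β ≤ 1) (hβc : β + c ≤ 1)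
    (hD : ∀ n, 0 ≤ D n) (hQ : ∀ n, 0 ≤ Q n)
    (hstep : ∀ n, V (n + 1) + (1 - β) * (D n + Q n) ≤ V n + E n)
    (hE : ∀ n, ∑ k ∈ Finset.range n, E k ≤ c * ∑ k ∈ Finset.range n, D k) (n : ℕ) :
    V n ≤ V 0 := by
  have htel : V n - V 0 ≤ ∑ k ∈ Finset.range n, (E k - (1 - β) * (D k + Q k)) := by
    rw [← Finset.sum_range_sub]
    exact Finset.sum_le_sum fun k _ => by linarith [hstep k]
  rw [Finset.sum_sub_distrib, ← Finset.mul_sum, Finset.sum_add_distrib] at htel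
  have hDs := Finset.sum_nonneg fun k (_ : k ∈ Finset.range n) => hD k
  have hQs := Finset.sum_nonneg fun k (_ : k ∈ Finset.range n) => hQ k
  nlinarith [hE n]

section Euclidean

variable {d : ℕ}

theorem LSmooth.nonneg [Nontrivial (EuclideanSpace ℝ (Fin d))]
    {g : EuclideanSpace ℝ (Fin d) → ℝ} {L : ℝ} (hg : LSmooth g L) : 0 ≤ L := by
  obtain ⟨v, hv⟩ := exists_ne (0 : EuclideanSpace ℝ (Fin d))
  have hbound := (abs_nonneg _).trans (hg.2 0 v)
  have hv' : 0 < ‖v - 0‖ ^ 2 := by rw [sub_zero]; exact pow_pos (norm_pos_iff.2 hv) 2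
  nlinarith

theorem sum_sum_delayed_smoothness_error_le {ι : Type*} [Fintype ι]
    {f : ι → EuclideanSpace ℝ (Fin d) → ℝ} {L : ι → ℝ} (hs : ∀ i, LSmooth (f i) (L i))
    {x : ℤ → EuclideanSpace ℝ (Fin d)} (hx : ∀ k ≤ 0, x k = x 0) {dly : ℤ → ι → ℕ} {T : ℕ}
    (hdly : ∀ k i, dly k i ≤ T) (n : ℕ) :
    ∑ k ∈ Finset.range n, ∑ i, L i / 2 * ‖x (k + 1) - x (k - dly k i)‖ ^ 2
      ≤ (∑ i, L i / 2) * (T + 1) ^ 2 * ∑ k ∈ Finset.range n, ‖x (k + 1) - x k‖ ^ 2 := by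
  rcases subsingleton_or_nontrivial (EuclideanSpace ℝ (Fin d)) with _ | _
  · simp [norm_of_subsingleton]
  · exact sum_sum_delayed_sq_le hx (fun i => div_nonneg (hs i).nonneg zero_le_two) hdly n

theorem sqrt_mul_opNorm_lt_one {ι : Type*} [Fintype ι] {f : ι → EuclideanSpace ℝ (Fin d) → ℝ}
    {L : ι → ℝ} (hs : ∀ i, LSmooth (f i) (L i)) {F : Type*} [NormedAddCommGroup F]
    [NormedSpace ℝ F] (K : EuclideanSpace ℝ (Fin d) →L[ℝ] F) {σ τ : ℝ} (hσ : 0 < σ) {T : ℕ}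
    (hstep : √(τ * σ) * ‖K‖ + σ * (∑ i, L i) * ((T : ℝ) + 1) ^ 2 < 1) :
    √(τ * σ) * ‖K‖ < 1 := by
  -- `LSmooth` puts no constraint on `L i` over the zero space, but there `K = 0`.
  rcases subsingleton_or_nontrivial (EuclideanSpace ℝ (Fin d)) with _ | _
  · simp [Subsingleton.elim K 0]
  · have := Finset.sum_nonneg fun i (_ : i ∈ Finset.univ) => (hs i).nonneg
    nlinarith [mul_nonneg (mul_nonneg hσ.le this) (sq_nonneg ((T : ℝ) + 1))]

theorem LSmooth.sub_le_inner_add {g : EuclideanSpace ℝ (Fin d) → ℝ} {L : ℝ}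
    (hc : ConvexOn ℝ Set.univ g) (hs : LSmooth g L) (w p q : EuclideanSpace ℝ (Fin d)) :
    g p - g q ≤ ⟪gradient g w, p - q⟫ + L / 2 * ‖p - w‖ ^ 2 := by
  have hlower := hc.inner_gradient_le_sub (hs.1 w) q
  have hupper := (abs_le.1 (hs.2 w p)).2
  have hsplit : ⟪gradient g w, p - q⟫ = ⟪gradient g w, p - w⟫ - ⟪gradient g w, q - w⟫ := by
    rw [← inner_sub_right, sub_sub_sub_cancel_right]
  linarith

theorem sum_sub_le_inner_sum_add {ι : Type*} [Fintype ι] {f : ι → EuclideanSpace ℝ (Fin d) → ℝ}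
    {L : ι → ℝ} (hc : ∀ i, ConvexOn ℝ Set.univ (f i)) (hs : ∀ i, LSmooth (f i) (L i))
    (w : ι → EuclideanSpace ℝ (Fin d)) (p q : EuclideanSpace ℝ (Fin d)) :
    ∑ i, f i p - ∑ i, f i q
      ≤ ⟪∑ i, gradient (f i) (w i), p - q⟫ + ∑ i, L i / 2 * ‖p - w i‖ ^ 2 := by
  rw [← Finset.sum_sub_distrib, sum_inner, ← Finset.sum_add_distrib]
  exact Finset.sum_le_sum fun i _ => (hs i).sub_le_inner_add (hc i) (w i) p q

theorem IsProxPt.exists_eq_coe_inner_le {h : EuclideanSpace ℝ (Fin d) → EReal} {τ : ℝ}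
    (hτ : 0 < τ) (hconv : EConvexFn h) (hbot : ∀ z, h z ≠ ⊥) {z p u : EuclideanSpace ℝ (Fin d)}
    {r : ℝ} (hp : IsProxPt (fun v => (τ : EReal) * h v) z p) (hu : h u = r) :
    ∃ q : ℝ, h p = q ∧ τ * q + ⟪z - p, u - p⟫ ≤ τ * r := by
  have exists_coe : ∀ v (s : ℝ), h v ≤ s → ∃ q : ℝ, h v = q ∧ q ≤ s := by
    intro v s hv
    have hv_top := ne_top_of_le_ne_top (EReal.coe_ne_top s) hv
    refine ⟨(h v).toReal, (EReal.coe_toReal hv_top (hbot v)).symm, ?_⟩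
    rwa [← EReal.coe_le_coe_iff, EReal.coe_toReal hv_top (hbot v)]
  have hp_top : h p ≠ ⊤ := by
    intro htop
    have := hp u
    simp only [htop, hu, EReal.coe_mul_top_of_pos hτ, EReal.top_add_coe, top_le_iff] at this
    exact EReal.coe_ne_top _ (by exact_mod_cast this)
  set q := (h p).toReal
  have hq : h p = q := (EReal.coe_toReal hp_top (hbot p)).symm
  have prox_real : ∀ v (s : ℝ), h v = s → τ * q + ‖p - z‖ ^ 2 / 2 ≤ τ * s + ‖v - z‖ ^ 2 / 2 := by
    intro v s hv
    have := hp v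
    simp only [hq, hv] at this
    exact_mod_cast this
  refine ⟨q, hq, ?_⟩
  -- Compare `p` with the points `(1 - t) • p + t • u` of the segment `[p, u]` and let `t → 0`.
  suffices τ * q - τ * r + ⟪z - p, u - p⟫ ≤ 0 by linarith
  refine le_zero_of_forall_le_mul (c := ‖u - p‖ ^ 2 / 2) fun t ht0 ht1 => ?_
  obtain ⟨s, hs, hsle⟩ := exists_coe ((1 - t) • p + t • u) ((1 - t) * q + t * r) (by
    have := hconv p u (1 - t) t (by linarith) ht0.le (by ring)
    rw [hq, hu] at this
    exact this.trans_eq (by norm_cast))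
  have hexp : ‖(1 - t) • p + t • u - z‖ ^ 2
      = ‖p - z‖ ^ 2 + 2 * t * ⟪p - z, u - p⟫ + t ^ 2 * ‖u - p‖ ^ 2 := by
    rw [show (1 - t) • p + t • u - z = (p - z) + t • (u - p) by module, norm_add_sq_real,
      real_inner_smul_right, norm_smul, Real.norm_of_nonneg ht0.le]
    ring
  have := prox_real _ s hs
  rw [hexp] at this
  have hin : ⟪z - p, u - p⟫ = -⟪p - z, u - p⟫ := by rw [← inner_neg_left, neg_sub]
  nlinarith

end Euclidean

section Saddle

variable {d₁ d₂ : ℕ} {f : EuclideanSpace ℝ (Fin d₁) → ℝ} {h : EuclideanSpace ℝ (Fin d₂) → EReal}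
  {K : EuclideanSpace ℝ (Fin d₁) →L[ℝ] EuclideanSpace ℝ (Fin d₂)}
  {xh : EuclideanSpace ℝ (Fin d₁)} {yh : EuclideanSpace ℝ (Fin d₂)}

theorem Lagr_eq_coe (x : EuclideanSpace ℝ (Fin d₁)) {y : EuclideanSpace ℝ (Fin d₂)} {r : ℝ}
    (hy : h y = r) : Lagr f h K x y = ((f x + ⟪K x, y⟫ - r : ℝ) : EReal) := by
  rw [Lagr, hy]
  norm_cast

theorem IsSaddlePt.ne_top (hsad : IsSaddlePt (Lagr f h K) xh yh) (hproper : EProper h) :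
    h yh ≠ ⊤ := by
  obtain ⟨⟨y₀, hy₀⟩, hbot⟩ := hproper
  intro htop
  have hle := (hsad xh y₀).1
  rw [Lagr_eq_coe xh (EReal.coe_toReal hy₀ (hbot y₀)).symm, Lagr, htop, EReal.sub_top,
    le_bot_iff] at hle
  exact EReal.coe_ne_bot _ hle

theorem IsSaddlePt.dual_le (hsad : IsSaddlePt (Lagr f h K) xh yh) {rh : ℝ} (hyh : h yh = rh)
    {u : EuclideanSpace ℝ (Fin d₂)} {r : ℝ} (hu : h u = r) :
    ⟪K xh, u⟫ - r ≤ ⟪K xh, yh⟫ - rh := by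
  have hle := (hsad xh u).1
  rw [Lagr_eq_coe xh hu, Lagr_eq_coe xh hyh, EReal.coe_le_coe_iff] at hle
  linarith

theorem IsSaddlePt.primal_le (hsad : IsSaddlePt (Lagr f h K) xh yh) {rh : ℝ} (hyh : h yh = rh)
    (x : EuclideanSpace ℝ (Fin d₁)) :
    f xh + ⟪K xh, yh⟫ ≤ f x + ⟪K x, yh⟫ := by
  have hle := (hsad x yh).2
  rw [Lagr_eq_coe xh hyh, Lagr_eq_coe x hyh, EReal.coe_le_coe_iff] at hle
  linarith

end Saddle

theorem stmt_6_general
    (d₁ d₂ N T : ℕ)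
    (f : Fin N → EuclideanSpace ℝ (Fin d₁) → ℝ) (Lc : Fin N → ℝ)
    (hconv : ∀ i, ConvexOn ℝ Set.univ (f i))
    (hsmooth : ∀ i, LSmooth (f i) (Lc i))
    (hstar : EuclideanSpace ℝ (Fin d₂) → EReal)
    (hproper : EProper hstar) (hconvh : EConvexFn hstar)
    (K : EuclideanSpace ℝ (Fin d₁) →L[ℝ] EuclideanSpace ℝ (Fin d₂))
    (σ τ : ℝ) (hσ : 0 < σ) (hτ : 0 < τ)
    (x : ℤ → EuclideanSpace ℝ (Fin d₁)) (y : ℤ → EuclideanSpace ℝ (Fin d₂))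
    (hx0 : ∀ k : ℤ, k ≤ 0 → x k = x 0) (hy0 : ∀ k : ℤ, k ≤ 0 → y k = y 0)
    (dly : ℤ → Fin N → ℕ) (hdly : ∀ (k : ℤ) (i : Fin N), dly k i ≤ T)
    (hxiter : ∀ k : ℤ, 0 ≤ k →
      x (k + 1) = x k - σ • (∑ i, gradient (f i) (x (k - (dly k i : ℤ))))
        - σ • (ContinuousLinearMap.adjoint K) ((2 : ℝ) • y k - y (k - 1)))
    (hyiter : ∀ k : ℤ, 0 ≤ k →
      IsProxPt (fun u => (τ : EReal) * hstar u) (y k + τ • K (x (k + 1))) (y (k + 1)))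
    (xh : EuclideanSpace ℝ (Fin d₁)) (yh : EuclideanSpace ℝ (Fin d₂))
    (hsaddle : IsSaddlePt (Lagr (fun z => ∑ i, f i z) hstar K) xh yh)
    (hstep : Real.sqrt (τ * σ) * ‖K‖ + σ * (∑ i, Lc i) * ((T : ℝ) + 1) ^ 2 < 1)
 :
    ∀ k : ℤ, 0 ≤ k →
      ‖x k - xh‖ ^ 2 / (2 * σ) + ‖y k - yh‖ ^ 2 / (2 * τ)
        ≤ (1 - τ * σ * ‖K‖ ^ 2)⁻¹
          * (‖x 0 - xh‖ ^ 2 / (2 * σ) + ‖y 0 - yh‖ ^ 2 / (2 * τ)) := by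
  have hyh : hstar yh = (hstar yh).toReal :=
    (EReal.coe_toReal (hsaddle.ne_top hproper) (hproper.2 yh)).symm
  set β := √(τ * σ) * ‖K‖
  set V : ℕ → ℝ := fun n => pdEnergy K σ τ xh yh (x n) (y (n - 1)) (y n)
  have hdescent : ∀ n : ℕ, V (n + 1)
      + (1 - β) * (‖x (n + 1) - x n‖ ^ 2 / (2 * σ) + ‖y n - y (n - 1)‖ ^ 2 / (2 * τ))
      ≤ V n + ∑ i, Lc i / 2 * ‖x (n + 1) - x (n - dly n i)‖ ^ 2 := fun n => by
    obtain ⟨q, hq, hprox⟩ :=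
      (hyiter n n.cast_nonneg).exists_eq_coe_inner_le hτ hconvh hproper.2 hyh
    have hP := primal_step_inner_le K hσ (hxiter n n.cast_nonneg)
      (sum_sub_le_inner_sum_add hconv hsmooth _ _ xh) (hsaddle.primal_le hyh _)
    have hD := dual_step_inner_le K hτ hprox (hsaddle.dual_le hyh hq)
    simpa [V] using pdEnergy_step K hσ hτ hP hD
  have hβ1 : β < 1 := sqrt_mul_opNorm_lt_one hsmooth K hσ hstep
  have herror : ∀ n, ∑ k ∈ Finset.range n, ∑ i, Lc i / 2 * ‖x (k + 1) - x (k - dly k i)‖ ^ 2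
      ≤ σ * (∑ i, Lc i) * ((T : ℝ) + 1) ^ 2
        * ∑ k ∈ Finset.range n, ‖x (k + 1) - x k‖ ^ 2 / (2 * σ) := fun n =>
    (sum_sum_delayed_smoothness_error_le hsmooth hx0 hdly n).trans_eq (by
      rw [← Finset.sum_div, ← Finset.sum_div]
      field_simp)
  intro k hk
  lift k to ℕ using hk
  have hβ2 : 0 < 1 - τ * σ * ‖K‖ ^ 2 := by
    rw [← Real.sq_sqrt (by positivity : 0 ≤ τ * σ), ← mul_pow]
    nlinarith [hβ1, (by positivity : 0 ≤ β)]
  have hV0 : V 0 = ‖x 0 - xh‖ ^ 2 / (2 * σ) + ‖y 0 - yh‖ ^ 2 / (2 * τ) := by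
    simp [V, pdEnergy, hy0 (-1)]
  rw [le_inv_mul_iff₀ hβ2, ← hV0]
  exact (mul_le_pdEnergy K hσ hτ xh yh _ _ _).trans <| le_initial_of_step_bound hβ1.le
    (by linarith) (fun _ => by positivity) (fun _ => by positivity) hdescent herror k

/-- Theorem 1 (i): boundedness of the extrapolated PD-PIAG iterates. -/
theorem stmt_6
    (d₁ d₂ N T : ℕ)
    (f : Fin N → EuclideanSpace ℝ (Fin d₁) → ℝ) (Lc : Fin N → ℝ)
    (hconv : ∀ i, ConvexOn ℝ Set.univ (f i))
    (hsmooth : ∀ i, LSmooth (f i) (Lc i))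
    (hstar : EuclideanSpace ℝ (Fin d₂) → EReal)
    (hproper : EProper hstar) (hlsc : LowerSemicontinuous hstar) (hconvh : EConvexFn hstar)
    (K : EuclideanSpace ℝ (Fin d₁) →L[ℝ] EuclideanSpace ℝ (Fin d₂))
    (σ τ : ℝ) (hσ : 0 < σ) (hτ : 0 < τ)
    (x : ℤ → EuclideanSpace ℝ (Fin d₁)) (y : ℤ → EuclideanSpace ℝ (Fin d₂))
    (hx0 : ∀ k : ℤ, k ≤ 0 → x k = x 0) (hy0 : ∀ k : ℤ, k ≤ 0 → y k = y 0)
    (dly : ℤ → Fin N → ℕ) (hdly : ∀ (k : ℤ) (i : Fin N), dly k i ≤ T)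
    (hxiter : ∀ k : ℤ, 0 ≤ k →
      x (k + 1) = x k - σ • (∑ i, gradient (f i) (x (k - (dly k i : ℤ))))
        - σ • (ContinuousLinearMap.adjoint K) ((2 : ℝ) • y k - y (k - 1)))
    (hyiter : ∀ k : ℤ, 0 ≤ k →
      IsProxPt (fun u => (τ : EReal) * hstar u) (y k + τ • K (x (k + 1))) (y (k + 1)))
    (xh : EuclideanSpace ℝ (Fin d₁)) (yh : EuclideanSpace ℝ (Fin d₂))
    (hsaddle : IsSaddlePt (Lagr (fun z => ∑ i, f i z) hstar K) xh yh)
    (hstep : Real.sqrt (τ * σ) * ‖K‖ + σ * (∑ i, Lc i) * ((T : ℝ) + 1) ^ 2 < 1)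
 :
    ∀ k : ℤ, 0 ≤ k →
      ‖x k - xh‖ ^ 2 / (2 * σ) + ‖y k - yh‖ ^ 2 / (2 * τ)
        ≤ (1 - τ * σ * ‖K‖ ^ 2)⁻¹
          * (‖x 0 - xh‖ ^ 2 / (2 * σ) + ‖y 0 - yh‖ ^ 2 / (2 * τ)) :=
  stmt_6_general d₁ d₂ N T f Lc hconv hsmooth hstar hproper hconvh K σ τ hσ hτ x y hx0 hy0 dly hdly
    hxiter hyiter xh yh hsaddle hstep
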